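/- arXiv:2010.07070 — 2 statements merged into one kernel-verified Lean document; each statement's English description precedes it below -/
import Mathlib

section
/- In a liquid democracy election with unit weights, a distant agent is a dummy: if agent i has a guru d*(i) = g and the delegation distance from i to g (number of intermediaries plus one, counting g) is at least β, then DB_i(V) = 0. -/
open Finset

/-- The Banzhaf index of player `i` in the simple game `ν` on the finite player set `α`. -/
def banzhaf {α : Type*} [Fintype α] [DecidableEq α] (ν : Finset α → ℤ) (i : α) : ℚ :=
  (∑ C ∈ (Finset.univ.erase i).powerset, ((ν (insert i C) - ν C : ℤ) : ℚ)) /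
    2 ^ (Fintype.card α - 1)

/-- `LinkedIn d C a g` : agent `a` is linked to the guru `g` (a fixed point of the
delegation map `d`) by a delegation chain all of whose members lie in `C`.
`d a = none` represents abstention. -/
inductive LinkedIn {α : Type*} (d : α → Option α) (C : Finset α) : α → α → Prop
  | guru {a : α} : a ∈ C → d a = some a → LinkedIn d C a a
  | step {a b g : α} : a ∈ C → d a = some b → a ≠ b → LinkedIn d C b g → LinkedIn d C a g

/-- `hatD d C` : the set of agents that directly or indirectly delegate to some guru
in `C` through a delegation chain wholly contained in `C`. -/
noncomputable def hatD {α : Type*} [Fintype α] (d : α → Option α) (C : Finset α) :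
    Finset α :=
  @Finset.filter _ (fun a => ∃ g, LinkedIn d C a g) (Classical.decPred _) Finset.univ

open Classical in
/-- The delegative simple game of the liquid democracy election `(N, ω, d, β)`:
a coalition `C` wins iff the weight accrued by its gurus from within `C` meets the
quota `β`. -/
noncomputable def nuD {α : Type*} [Fintype α] (ω : α → ℝ) (β : ℝ) (d : α → Option α)
    (C : Finset α) : ℤ :=
  if β ≤ ∑ a ∈ hatD d C, ω a then 1 else 0

/-- The delegative Banzhaf index of agent `i` in the liquid democracy election
`(N, ω, d, β)`. -/
noncomputable def DB {α : Type*} [Fintype α] [DecidableEq α] (ω : α → ℝ) (β : ℝ)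
    (d : α → Option α) (i : α) : ℚ :=
  banzhaf (nuD ω β d) i

/-- `ChainList d a l g` : the delegation chain from `a` reaches the guru `g`, and
`l` is the list of agents strictly after `a` on the chain (the intermediaries
followed by `g` itself); thus `l.length` is the delegation distance from `a` to `g`
under unit weights. -/
inductive ChainList {α : Type*} (d : α → Option α) : α → List α → α → Prop
  | guru {g : α} : d g = some g → ChainList d g [] g
  | step {a b g : α} {l : List α} : d a = some b → a ≠ b → ChainList d b l g →
      ChainList d a (b :: l) g

/-! If `i` reaches her guru inside `C ∪ {i}`, her whole chain lies in `C`, and every member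
of that chain reaches the same guru inside `C`; so `C` alone already accrues at least
`l.length ≥ β` agents. Otherwise `i` links nobody to a guru and adding her changes nothing.
Either way `C ∪ {i}` wins iff `C` does, so `i` is never a swing player. -/

section Delegation

variable {α : Type*} {d : α → Option α}

theorem ChainList.unique {a g g' : α} {l l' : List α}
    (h : ChainList d a l g) (h' : ChainList d a l' g') : l = l' ∧ g = g' := by
  induction h generalizing l' with
  | guru hg =>
    cases h' with
    | guru => exact ⟨rfl, rfl⟩
    | step hd hne _ => exact absurd (Option.some.inj (hg ▸ hd)) hne
  | step hd hne _ ih =>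
    cases h' with
    | guru hg' => exact absurd (Option.some.inj (hg' ▸ hd)) hne
    | step hd' _ hc' =>
      cases Option.some.inj (hd ▸ hd')
      obtain ⟨rfl, rfl⟩ := ih hc'
      exact ⟨rfl, rfl⟩

theorem ChainList.exists_suffix {a x g : α} {l : List α} (h : ChainList d a l g)
    (hx : x ∈ l) : ∃ lx, ChainList d x lx g ∧ lx.length < l.length ∧ lx ⊆ l := by
  induction h with
  | guru => simp at hx
  | step _ _ hc ih =>
    rcases List.mem_cons.1 hx with rfl | hx
    · exact ⟨_, hc, by simp, List.subset_cons_self _ _⟩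
    · obtain ⟨lx, hcx, hlen, hsub⟩ := ih hx
      exact ⟨lx, hcx, Nat.lt_succ_of_lt hlen, List.subset_cons_of_subset _ hsub⟩

theorem ChainList.not_mem {a g : α} {l : List α} (h : ChainList d a l g) : a ∉ l := by
  intro ha
  obtain ⟨la, hca, hlen, -⟩ := h.exists_suffix ha
  obtain ⟨rfl, -⟩ := hca.unique h
  exact lt_irrefl _ hlen

theorem ChainList.nodup {a g : α} {l : List α} (h : ChainList d a l g) : l.Nodup := by
  induction h with
  | guru => exact List.nodup_nil
  | step _ _ hc ih => exact List.nodup_cons.2 ⟨hc.not_mem, ih⟩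

theorem ChainList.linkedIn {C : Finset α} {a g : α} {l : List α} (h : ChainList d a l g)
    (ha : a ∈ C) (hl : ∀ y ∈ l, y ∈ C) : LinkedIn d C a g := by
  induction h with
  | guru hg => exact .guru ha hg
  | step hd hne _ ih =>
    exact .step ha hd hne
      (ih (hl _ List.mem_cons_self) fun y hy => hl y (List.mem_cons_of_mem _ hy))

theorem LinkedIn.mem {C : Finset α} {a g : α} (h : LinkedIn d C a g) : a ∈ C := by
  cases h with
  | guru ha _ => exact ha
  | step ha _ _ _ => exact ha

theorem LinkedIn.mem_of_chainList {C : Finset α} {a g g' : α} {l : List α}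
    (h : LinkedIn d C a g') (hc : ChainList d a l g) : ∀ y ∈ l, y ∈ C := by
  induction h generalizing l with
  | guru _ hda =>
    cases hc with
    | guru => simp
    | step hd hne _ => exact absurd (Option.some.inj (hda ▸ hd)) hne
  | step _ hd hne hlink ih =>
    cases hc with
    | guru hg => exact absurd (Option.some.inj (hg ▸ hd)) hne
    | step hd' _ hc' =>
      cases Option.some.inj (hd ▸ hd')
      intro y hy
      rcases List.mem_cons.1 hy with rfl | hy
      · exact hlink.mem
      · exact ih hc' y hy

theorem LinkedIn.mono {C C' : Finset α} {a g : α} (hCC' : C ⊆ C') (h : LinkedIn d C a g) :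
    LinkedIn d C' a g := by
  induction h with
  | guru ha hda => exact .guru (hCC' ha) hda
  | step ha hd hne _ ih => exact .step (hCC' ha) hd hne ih

theorem LinkedIn.of_insert [DecidableEq α] {C : Finset α} {i a g : α}
    (hi : ∀ g', ¬LinkedIn d (insert i C) i g') (h : LinkedIn d (insert i C) a g) :
    LinkedIn d C a g := by
  induction h with
  | guru ha hda =>
    rcases Finset.mem_insert.1 ha with rfl | ha
    · exact absurd (.guru ha hda) (hi _)
    · exact .guru ha hda
  | step ha hd hne hlink ih =>
    rcases Finset.mem_insert.1 ha with rfl | ha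
    · exact absurd (.step ha hd hne hlink) (hi _)
    · exact .step ha hd hne ih

variable [Fintype α]

theorem mem_hatD {C : Finset α} {a : α} : a ∈ hatD d C ↔ ∃ g, LinkedIn d C a g := by
  simp [hatD]

theorem hatD_mono {C C' : Finset α} (hCC' : C ⊆ C') : hatD d C ⊆ hatD d C' := fun _ ha =>
  let ⟨g, hg⟩ := mem_hatD.1 ha
  mem_hatD.2 ⟨g, hg.mono hCC'⟩

theorem hatD_insert_subset_of_not_mem [DecidableEq α] {C : Finset α} {i : α}
    (hi : i ∉ hatD d (insert i C)) : hatD d (insert i C) ⊆ hatD d C := fun _ ha =>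
  let ⟨g, hg⟩ := mem_hatD.1 ha
  mem_hatD.2 ⟨g, hg.of_insert fun g' hg' => hi (mem_hatD.2 ⟨g', hg'⟩)⟩

theorem ChainList.length_le_card_hatD [DecidableEq α] {C : Finset α} {i g : α} {l : List α}
    (h : ChainList d i l g) (hi : i ∈ hatD d (insert i C)) : l.length ≤ #(hatD d C) := by
  obtain ⟨g', hg'⟩ := mem_hatD.1 hi
  have hlC : ∀ y ∈ l, y ∈ C := fun y hy =>
    (Finset.mem_insert.1 (hg'.mem_of_chainList h y hy)).resolve_left
      fun hyi => h.not_mem (hyi ▸ hy)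
  have hsub : l.toFinset ⊆ hatD d C := fun x hx => by
    obtain ⟨lx, hcx, -, hlx⟩ := h.exists_suffix (List.mem_toFinset.1 hx)
    exact mem_hatD.2
      ⟨g, hcx.linkedIn (hlC x (List.mem_toFinset.1 hx)) fun y hy => hlC y (hlx hy)⟩
  calc l.length = #l.toFinset := (List.toFinset_card_of_nodup h.nodup).symm
    _ ≤ #(hatD d C) := Finset.card_le_card hsub

theorem nuD_one_eq (β : ℝ) (C : Finset α) :
    nuD (fun _ => (1 : ℝ)) β d C = if β ≤ #(hatD d C) then 1 else 0 := by
  simp only [nuD, Finset.sum_const, nsmul_eq_mul, mul_one]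

theorem ChainList.nuD_one_insert [DecidableEq α] {β : ℝ} {i g : α} {l : List α}
    (h : ChainList d i l g) (hdist : β ≤ l.length) (C : Finset α) :
    nuD (fun _ => (1 : ℝ)) β d (insert i C) = nuD (fun _ => (1 : ℝ)) β d C := by
  have hmono : #(hatD d C) ≤ #(hatD d (insert i C)) :=
    Finset.card_le_card (hatD_mono (Finset.subset_insert i C))
  have hwins : β ≤ #(hatD d (insert i C)) ↔ β ≤ #(hatD d C) := by
    refine ⟨fun hw => ?_, fun hw => hw.trans (by exact_mod_cast hmono)⟩
    by_cases hi : i ∈ hatD d (insert i C)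
    · exact hdist.trans (by exact_mod_cast h.length_le_card_hatD hi)
    · exact hw.trans
        (by exact_mod_cast Finset.card_le_card (hatD_insert_subset_of_not_mem hi))
  rw [nuD_one_eq, nuD_one_eq, if_congr hwins rfl rfl]

end Delegation

theorem banzhaf_eq_zero_of_dummy {α : Type*} [Fintype α] [DecidableEq α]
    {ν : Finset α → ℤ} {i : α} (h : ∀ C, i ∉ C → ν (insert i C) = ν C) :
    banzhaf ν i = 0 := by
  rw [banzhaf, Finset.sum_eq_zero, zero_div]
  intro C hC
  have hiC : i ∉ C := fun hi => by simpa using Finset.mem_powerset.1 hC hi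
  rw [h C hiC, sub_self, Int.cast_zero]

/-- A distant agent is a dummy: in a unit-weight liquid democracy election, if the
delegation distance from `i` to her guru `g` is at least the quota `β`, then `i`'s
delegative Banzhaf index is 0. -/
theorem distant_agent_dummy {α : Type*} [Fintype α] [DecidableEq α]
    (β : ℝ) (d : α → Option α) (i g : α) (l : List α)
    (hchain : ChainList d i l g) (hdist : β ≤ (l.length : ℝ)) :
    DB (fun _ => (1 : ℝ)) β d i = 0 :=
  banzhaf_eq_zero_of_dummy fun C _ => hchain.nuD_one_insert hdist C
end

section
/- An agent on or delegating into a delegation cycle is a dummy: in a liquid democracy election V = (N, ω, d, β), if agent i has no guru (the delegation chain starting at i never reaches a fixed point of d, i.e., enters a cycle), then DB_i(V) = 0. -/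
open Finset

lemma linkedIn_mono {α : Type*} {d : α → Option α} {C C' : Finset α} (hCC : C ⊆ C')
    {a g : α} (h : LinkedIn d C a g) : LinkedIn d C' a g := by
  induction h with
  | guru hm hd => exact LinkedIn.guru (hCC hm) hd
  | step hm hd hne _ ih => exact LinkedIn.step (hCC hm) hd hne ih

lemma linkedIn_erase {α : Type*} [Fintype α] [DecidableEq α] {d : α → Option α}
    {C : Finset α} {i : α} (hnoguru : ¬ ∃ g, LinkedIn d Finset.univ i g)
    {a g : α} (h : LinkedIn d (insert i C) a g) : LinkedIn d C a g := by
  induction h with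
  | @guru a hm hd =>
      have hai : a ≠ i := by
        rintro rfl
        exact hnoguru ⟨a, LinkedIn.guru (Finset.mem_univ a) hd⟩
      exact LinkedIn.guru ((Finset.mem_insert.1 hm).resolve_left hai) hd
  | @step a b g hm hd hne hb ih =>
      have hai : a ≠ i := by
        rintro rfl
        exact hnoguru ⟨g, LinkedIn.step (Finset.mem_univ a) hd hne
          (linkedIn_mono (Finset.subset_univ _) hb)⟩
      exact LinkedIn.step ((Finset.mem_insert.1 hm).resolve_left hai) hd hne ih

/-- An agent on, or delegating into, a delegation cycle is a dummy: if agent `i`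
has no guru (no delegation chain from `i`, even through the whole agent set,
reaches a fixed point of `d`), then her delegative Banzhaf index is 0. -/
theorem cyclic_agent_dummy {α : Type*} [Fintype α] [DecidableEq α]
    (ω : α → ℝ) (hω : ∀ a, 0 < ω a) (β : ℝ) (d : α → Option α) (i : α)
    (hnoguru : ¬ ∃ g, LinkedIn d Finset.univ i g) :
    DB ω β d i = 0 := by
  unfold DB banzhaf
  have h0 : ∀ C ∈ (Finset.univ.erase i).powerset,
      ((nuD ω β d (insert i C) - nuD ω β d C : ℤ) : ℚ) = 0 := by
    intro C _
    have : hatD d (insert i C) = hatD d C := by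
      ext a
      unfold hatD
      simp only [Finset.mem_filter, Finset.mem_univ, true_and]
      constructor
      · rintro ⟨g, hg⟩; exact ⟨g, linkedIn_erase hnoguru hg⟩
      · rintro ⟨g, hg⟩; exact ⟨g, linkedIn_mono (Finset.subset_insert _ _) hg⟩
    unfold nuD
    rw [this]
    simp
  rw [Finset.sum_congr rfl h0]
  simp
end
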